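/- arXiv:math-ph/0411018 — 2 statements merged into one kernel-verified Lean document; each statement's English description precedes it below -/
import Mathlib

section
/- Let ε, σ ∈ {−1, +1}^n with Π_{m=1}^n ε_m σ_m = +1, and fix a phase-space point z_* ∈ ℝ^{2n}, a real number λ, and vectors u, v, w, x ∈ ℝ^n satisfying L^ε(z_*)u = λu, L^ε(z_*)v = λv, L^σ(z_*)w = λw and L^σ(z_*)x = λx. Define f(z) = uᵀ L^ε(z) v and g(z) = wᵀ L^σ(z) x, let d_m = Π_{k=1}^{m−1} ε_k σ_k (so d_1 = 1), let D = diag(d_1, …, d_n), and for vectors a, c ∈ ℝ^n set S(a, c) = Σ_{m=1}^n d_m · b_m(z_*) · (ε_m a_{m+1} c_m − σ_m a_m c_{m+1}), with vector indices taken mod n. Then {f, g}(z_*) = (1/n)·[ (vᵀ D x)·S(u, w) + (uᵀ D w)·S(v, x) ]. -/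
/-!
Both `f` and `g` are linear in the momenta and in the bond variables `b_j`, so `{f, g}(z)` is a sum
of local contributions of the bonds. Because `∏ ε_m σ_m = 1`, the signs `d_m` are consistent
around the cycle, and the diagonal matrix `D` conjugates `L^σ` into `L^ε`; hence `Dw` and `Dx` are
`λ`-eigenvectors of `L^ε(z)`. For two `λ`-eigenvectors `a, c` of `L^ε(z)` the discrete Wronskian
`ε_j b_j (a_{j+1} c_j - a_j c_{j+1})` does not depend on `j`, and `S(u, w)`, `S(v, x)` are `n` times
the Wronskians of `(u, Dw)` and `(v, Dx)`. Since `d_j² = 1` and `ε_j d_j d_{j+1} = σ_j`, the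
contribution of the bond `j` is the average over its ends `m = j, j + 1` of
`v_m d_m x_m W(u, Dw) + u_m d_m w_m W(v, Dx)`, and summing around the cycle gives the formula.
-/

open Matrix BigOperators

noncomputable def bfun {n : ℕ} [NeZero n] (z : (Fin n → ℝ) × (Fin n → ℝ)) (j : Fin n) : ℝ :=
  Real.exp ((z.1 j - z.1 (j + 1)) / 2)

/-- The Lax matrix `L`. -/
noncomputable def Lax {n : ℕ} [NeZero n] (z : (Fin n → ℝ) × (Fin n → ℝ)) :
    Matrix (Fin n) (Fin n) ℝ := fun r s =>
  (if r = s then z.2 r else 0) + (if r + 1 = s then bfun z r else 0) +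
    (if s + 1 = r then bfun z s else 0)

/-- The sign `σ_r`, equal to `-1` for the index corresponding to `b_n`. -/
noncomputable def sgn {n : ℕ} [NeZero n] (j : Fin n) : ℝ := if j + 1 = 0 then -1 else 1

/-- The Lax matrix `L̄` obtained from `L` by `b_n ↦ -b_n`. -/
noncomputable def LaxBar {n : ℕ} [NeZero n] (z : (Fin n → ℝ) × (Fin n → ℝ)) :
    Matrix (Fin n) (Fin n) ℝ := fun r s =>
  (if r = s then z.2 r else 0) + (if r + 1 = s then sgn r * bfun z r else 0) +
    (if s + 1 = r then sgn s * bfun z s else 0)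

/-- The canonical Poisson bracket on `ℝ^{2n}`. -/
noncomputable def pb {n : ℕ} (f g : (Fin n → ℝ) × (Fin n → ℝ) → ℝ)
    (z : (Fin n → ℝ) × (Fin n → ℝ)) : ℝ :=
  ∑ j : Fin n,
    (fderiv ℝ f z (Pi.single j 1, 0) * fderiv ℝ g z (0, Pi.single j 1) -
     fderiv ℝ f z (0, Pi.single j 1) * fderiv ℝ g z (Pi.single j 1, 0))

/-- The integrals of motion `F_j = (1/j) Tr L^j`. -/
noncomputable def F {n : ℕ} [NeZero n] (j : ℕ) (z : (Fin n → ℝ) × (Fin n → ℝ)) : ℝ :=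
  (1 / j : ℝ) * (Lax z ^ j).trace

/-- The map `F = (F_1, …, F_n) : ℝ^{2n} → ℝ^n`. -/
noncomputable def Fvec {n : ℕ} [NeZero n] (z : (Fin n → ℝ) × (Fin n → ℝ)) : Fin n → ℝ :=
  fun j => F (j.val + 1) z

/-- The corank of `dF(z)`. -/
noncomputable def corank (n : ℕ) [NeZero n] (z : (Fin n → ℝ) × (Fin n → ℝ)) : ℕ :=
  n - Module.finrank ℝ (LinearMap.range (fderiv ℝ (Fvec (n := n)) z).toLinearMap)

/-- Number of (real) eigenvalues of `A` with two-dimensional eigenspace. -/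
noncomputable def nuCount {n : ℕ} (A : Matrix (Fin n) (Fin n) ℝ) : ℕ :=
  {μ : ℝ | Module.finrank ℝ (LinearMap.ker (Matrix.toLin' (A - μ • 1))) = 2}.ncard

/-- The Lax matrix with signs ε. -/
noncomputable def Leps {n : ℕ} [NeZero n] (ε : Fin n → ℝ)
    (z : (Fin n → ℝ) × (Fin n → ℝ)) : Matrix (Fin n) (Fin n) ℝ := fun r s =>
  (if r = s then z.2 r else 0) + (if r + 1 = s then ε r * bfun z r else 0) +
    (if s + 1 = r then ε s * bfun z s else 0)

namespace Fin

variable {n : ℕ} [NeZero n]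

lemma prod_ite_val_lt_add_one {M : Type*} [CommMonoid M] {f : Fin n → M} (hf : ∏ k, f k = 1)
    (j : Fin n) :
    ∏ k : Fin n, (if k.val < (j + 1).val then f k else 1) =
      (∏ k : Fin n, if k.val < j.val then f k else 1) * f j := by
  simp only [← Finset.prod_filter]
  rw [mul_comm, ← Finset.prod_insert (by simp)]
  rcases lt_or_ge (j.val + 1) n with hj | hj
  · rw [val_add_one_of_lt' hj]
    congr 1
    ext k
    simp only [Finset.mem_filter, Finset.mem_univ, true_and, Finset.mem_insert]
    omega
  · have hj0 : (j + 1).val = 0 := by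
      rw [Fin.val_add, Fin.val_one', Nat.add_mod_mod,
        show j.val + 1 = n by omega, Nat.mod_self]
    have hall : insert j (Finset.univ.filter fun k : Fin n => k.val < j.val) = Finset.univ := by
      ext k
      simp only [Finset.mem_filter, Finset.mem_univ, true_and, Finset.mem_insert, Fin.ext_iff,
        iff_true]
      omega
    simp only [hj0, Nat.not_lt_zero, Finset.filter_false, Finset.prod_empty, hall, hf]

open Fin.NatCast in
lemma apply_eq_apply_zero_of_add_one {α : Type*} {P : Fin n → α} (h : ∀ j, P (j + 1) = P j)
    (j : Fin n) : P j = P 0 := by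
  have key : ∀ k : ℕ, P k = P 0 := by
    intro k
    induction k with
    | zero => simp
    | succ k ih => rw [Nat.cast_succ, h, ih]
  simpa using key j

lemma sum_add_apply_add_one_div_two (f : Fin n → ℝ) :
    ∑ r, (f r + f (r + 1)) / 2 = ∑ r, f r := by
  rw [← Finset.sum_div, Finset.sum_add_distrib,
    Fintype.sum_equiv (Equiv.addRight 1) (fun r => f (r + 1)) f fun _ => rfl]
  ring

end Fin

section Lax

variable {n : ℕ}

noncomputable def coordQ (r : Fin n) : (Fin n → ℝ) × (Fin n → ℝ) →L[ℝ] ℝ :=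
  (ContinuousLinearMap.proj r).comp (ContinuousLinearMap.fst ℝ _ _)

noncomputable def coordP (r : Fin n) : (Fin n → ℝ) × (Fin n → ℝ) →L[ℝ] ℝ :=
  (ContinuousLinearMap.proj r).comp (ContinuousLinearMap.snd ℝ _ _)

@[simp] lemma coordQ_apply (r : Fin n) (h : (Fin n → ℝ) × (Fin n → ℝ)) : coordQ r h = h.1 r := rfl

@[simp] lemma coordP_apply (r : Fin n) (h : (Fin n → ℝ) × (Fin n → ℝ)) : coordP r h = h.2 r := rfl

lemma pb_eq_fderiv_sub (f g : (Fin n → ℝ) × (Fin n → ℝ) → ℝ) (z : (Fin n → ℝ) × (Fin n → ℝ)) :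
    pb f g z = fderiv ℝ f z (fun j => fderiv ℝ g z (0, Pi.single j 1), 0) -
      fderiv ℝ g z (fun j => fderiv ℝ f z (0, Pi.single j 1), 0) := by
  have hexpand : ∀ (φ : (Fin n → ℝ) × (Fin n → ℝ) →L[ℝ] ℝ) (v : Fin n → ℝ),
      φ (v, 0) = ∑ j, φ (Pi.single j 1, 0) * v j := by
    intro φ v
    have hv : ((v, 0) : (Fin n → ℝ) × (Fin n → ℝ)) = ∑ j, v j • (Pi.single j 1, 0) := by
      ext i <;> simp [Prod.fst_sum, Prod.snd_sum, Finset.sum_apply, Pi.single_apply]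
    rw [hv, map_sum]
    simp only [map_smul, smul_eq_mul, mul_comm]
  rw [pb, hexpand, hexpand, ← Finset.sum_sub_distrib]
  exact Finset.sum_congr rfl fun j _ => by ring

variable [NeZero n]

lemma Leps_mulVec_apply (ε : Fin n → ℝ) (z : (Fin n → ℝ) × (Fin n → ℝ)) (u : Fin n → ℝ)
    (j : Fin n) :
    (Leps ε z *ᵥ u) j =
      z.2 j * u j + ε j * bfun z j * u (j + 1) + ε (j - 1) * bfun z (j - 1) * u (j - 1) := by
  simp only [mulVec, dotProduct, Leps, add_mul, ite_mul, zero_mul, Finset.sum_add_distrib,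
    Finset.sum_ite_eq, Finset.mem_univ, if_true]
  simp only [← eq_sub_iff_add_eq (c := (1 : Fin n)), Finset.sum_ite_eq', Finset.mem_univ, if_true]

noncomputable def laxFun (a c : Fin n → ℝ) (y : (Fin n → ℝ) × (Fin n → ℝ)) : ℝ :=
  ∑ r, a r * y.2 r + ∑ r, c r * bfun y r

lemma dotProduct_Leps_mulVec (ε u v : Fin n → ℝ) (y : (Fin n → ℝ) × (Fin n → ℝ)) :
    u ⬝ᵥ (Leps ε y *ᵥ v) =
      laxFun (u * v) (fun r => ε r * (u r * v (r + 1) + u (r + 1) * v r)) y := by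
  have hshift : ∑ j, u j * (ε (j - 1) * bfun y (j - 1) * v (j - 1)) =
      ∑ r, u (r + 1) * (ε r * bfun y r * v r) :=
    (Fintype.sum_equiv (Equiv.addRight 1) _ _ fun r => by simp).symm
  simp only [dotProduct, Leps_mulVec_apply, mul_add, Finset.sum_add_distrib, hshift, laxFun]
  rw [add_assoc, ← Finset.sum_add_distrib]
  congr 1 <;> refine Finset.sum_congr rfl fun r _ => ?_
  · rw [Pi.mul_apply]; ring
  · ring

lemma hasFDerivAt_bfun (z : (Fin n → ℝ) × (Fin n → ℝ)) (r : Fin n) :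
    HasFDerivAt (fun y => bfun y r) (bfun z r • (2⁻¹ : ℝ) • (coordQ r - coordQ (r + 1))) z := by
  set ℓ : (Fin n → ℝ) × (Fin n → ℝ) →L[ℝ] ℝ := (2⁻¹ : ℝ) • (coordQ r - coordQ (r + 1))
  have hℓ : (fun y => bfun y r) = fun y => Real.exp (ℓ y) := funext fun y => by
    simp [ℓ, bfun, div_eq_inv_mul]
  rw [hℓ, show bfun z r = Real.exp (ℓ z) from congrFun hℓ z]
  exact ℓ.hasFDerivAt.exp

lemma fderiv_laxFun_apply (a c : Fin n → ℝ) (z h : (Fin n → ℝ) × (Fin n → ℝ)) :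
    fderiv ℝ (laxFun a c) z h =
      ∑ r, a r * h.2 r + ∑ r, c r * bfun z r * ((h.1 r - h.1 (r + 1)) / 2) := by
  have hderiv := (HasFDerivAt.fun_sum (u := Finset.univ) fun r _ =>
      ((coordP r).hasFDerivAt (x := z)).const_mul (a r)).add
    (HasFDerivAt.fun_sum (u := Finset.univ) fun r _ => (hasFDerivAt_bfun z r).const_mul (c r))
  rw [(show HasFDerivAt (laxFun a c) _ z from hderiv).fderiv]
  simp [div_eq_inv_mul, mul_assoc]

lemma pb_laxFun (a c a' c' : Fin n → ℝ) (z : (Fin n → ℝ) × (Fin n → ℝ)) :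
    pb (laxFun a c) (laxFun a' c') z =
      ∑ r, bfun z r / 2 * (c r * (a' r - a' (r + 1)) - c' r * (a r - a (r + 1))) := by
  have hgradP : ∀ a c : Fin n → ℝ, (fun j => fderiv ℝ (laxFun a c) z (0, Pi.single j 1)) = a :=
    fun a c => funext fun j => by simp [fderiv_laxFun_apply, Pi.single_apply]
  rw [pb_eq_fderiv_sub, hgradP, hgradP, fderiv_laxFun_apply, fderiv_laxFun_apply]
  simp only [Pi.zero_apply, mul_zero, Finset.sum_const_zero, zero_add, ← Finset.sum_sub_distrib]
  exact Finset.sum_congr rfl fun r _ => by ring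

end Lax

section Wronskian

variable {n : ℕ} [NeZero n] {ε : Fin n → ℝ} {z : (Fin n → ℝ) × (Fin n → ℝ)} {lam : ℝ}
  {a c : Fin n → ℝ}

noncomputable def wronskian (ε : Fin n → ℝ) (z : (Fin n → ℝ) × (Fin n → ℝ)) (a c : Fin n → ℝ)
    (j : Fin n) : ℝ :=
  ε j * bfun z j * (a (j + 1) * c j - a j * c (j + 1))

lemma wronskian_add_one (ha : Leps ε z *ᵥ a = lam • a) (hc : Leps ε z *ᵥ c = lam • c)
    (j : Fin n) : wronskian ε z a c (j + 1) = wronskian ε z a c j := by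
  have hja := congrFun ha (j + 1)
  have hjc := congrFun hc (j + 1)
  simp only [Leps_mulVec_apply, Pi.smul_apply, smul_eq_mul, add_sub_cancel_right] at hja hjc
  simp only [wronskian]
  linear_combination c (j + 1) * hja - a (j + 1) * hjc

lemma sum_wronskian (ha : Leps ε z *ᵥ a = lam • a) (hc : Leps ε z *ᵥ c = lam • c) :
    ∑ j, wronskian ε z a c j = n * wronskian ε z a c 0 := by
  simp [Fin.apply_eq_apply_zero_of_add_one (wronskian_add_one ha hc)]

end Wronskian

-- The contribution of the bond `j` to `{f, g}`, with primes denoting the site `j + 1`.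
lemma bracket_site_eq (e s d d' b u u' v v' w w' x x' : ℝ) (hd : d * d = 1) (hd' : d' * d' = 1)
    (hs : e * d * d' = s) :
    b / 2 * (e * (u * v' + u' * v) * (w * x - w' * x') -
        s * (w * x' + w' * x) * (u * v - u' * v')) =
      ((v * d * x + v' * d' * x') * (e * b * (u' * (d * w) - u * (d' * w'))) +
        (u * d * w + u' * d' * w') * (e * b * (v' * (d * x) - v * (d' * x')))) / 2 := by
  linear_combination -(b / 2) * e * (v * x * u' * w + u * w * v' * x) * hd +
    (b / 2) * e * (v' * x' * u * w' + u' * w' * v * x') * hd' -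
    (b / 2) * (-v * x * u * w' + v' * x' * u' * w - u * w * v * x' + u' * w' * v' * x) * hs

section Gauge

variable {n : ℕ} {ε σ d : Fin n → ℝ}

lemma prefix_sign_mul_self (hε : ∀ m, ε m = 1 ∨ ε m = -1) (hσ : ∀ m, σ m = 1 ∨ σ m = -1)
    (hd : ∀ m : Fin n, d m = ∏ k : Fin n, if k.val < m.val then ε k * σ k else 1) (m : Fin n) :
    d m * d m = 1 := by
  rw [hd, ← Finset.prod_mul_distrib]
  refine Finset.prod_eq_one fun k _ => ?_
  split_ifs
  · linear_combination (ε k * ε k) * mul_self_eq_one_iff.mpr (hσ k) + mul_self_eq_one_iff.mpr (hε k)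
  · exact one_mul 1

variable [NeZero n]

lemma prefix_sign_add_one (hprod : ∏ m, ε m * σ m = 1)
    (hd : ∀ m : Fin n, d m = ∏ k : Fin n, if k.val < m.val then ε k * σ k else 1) (j : Fin n) :
    d (j + 1) = d j * (ε j * σ j) := by
  rw [hd, hd, Fin.prod_ite_val_lt_add_one hprod]

lemma mul_gauge_add_one (hε : ∀ m, ε m = 1 ∨ ε m = -1)
    (hsucc : ∀ j, d (j + 1) = d j * (ε j * σ j)) (j : Fin n) :
    ε j * d (j + 1) = d j * σ j := by
  rw [hsucc]
  linear_combination d j * σ j * mul_self_eq_one_iff.mpr (hε j)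

lemma mul_gauge (hσ : ∀ m, σ m = 1 ∨ σ m = -1)
    (hsucc : ∀ j, d (j + 1) = d j * (ε j * σ j)) (j : Fin n) :
    ε j * d j = d (j + 1) * σ j := by
  rw [hsucc]
  linear_combination -(ε j * d j) * mul_self_eq_one_iff.mpr (hσ j)

lemma mul_gauge_mul_gauge (hε : ∀ m, ε m = 1 ∨ ε m = -1) (hdd : ∀ j, d j * d j = 1)
    (hsucc : ∀ j, d (j + 1) = d j * (ε j * σ j)) (j : Fin n) :
    ε j * d j * d (j + 1) = σ j := by
  rw [hsucc]
  linear_combination σ j * ε j * ε j * hdd j + σ j * mul_self_eq_one_iff.mpr (hε j)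

lemma sum_gauge_eq_sum_wronskian (h₁ : ∀ j, ε j * d (j + 1) = d j * σ j)
    (z : (Fin n → ℝ) × (Fin n → ℝ)) (a c : Fin n → ℝ) :
    ∑ m, d m * bfun z m * (ε m * a (m + 1) * c m - σ m * a m * c (m + 1)) =
      ∑ m, wronskian ε z a (d * c) m := by
  refine Finset.sum_congr rfl fun m _ => ?_
  simp only [wronskian, Pi.mul_apply]
  linear_combination (bfun z m * a m * c (m + 1)) * h₁ m

lemma Leps_mul_diagonal (h₁ : ∀ j, ε j * d (j + 1) = d j * σ j)
    (h₂ : ∀ j, ε j * d j = d (j + 1) * σ j) (z : (Fin n → ℝ) × (Fin n → ℝ)) :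
    Leps ε z * diagonal d = diagonal d * Leps σ z := by
  ext r s
  simp only [mul_diagonal, diagonal_mul, Leps, add_mul, mul_add, ite_mul, mul_ite, zero_mul,
    mul_zero]
  congr 1
  congr 1
  · split_ifs with h
    · subst h; ring
    · rfl
  · split_ifs with h
    · subst h; linear_combination bfun z r * h₁ r
    · rfl
  · split_ifs with h
    · subst h; linear_combination bfun z s * h₂ s
    · rfl

lemma Leps_mulVec_mul (h₁ : ∀ j, ε j * d (j + 1) = d j * σ j)
    (h₂ : ∀ j, ε j * d j = d (j + 1) * σ j) {z : (Fin n → ℝ) × (Fin n → ℝ)} {lam : ℝ}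
    {w : Fin n → ℝ} (hw : Leps σ z *ᵥ w = lam • w) :
    Leps ε z *ᵥ (d * w) = lam • (d * w) := by
  have hdw : d * w = diagonal d *ᵥ w := funext fun j => (mulVec_diagonal d w j).symm
  rw [hdw, mulVec_mulVec, Leps_mul_diagonal h₁ h₂, ← mulVec_mulVec, hw, mulVec_smul]

lemma pb_dotProduct_Leps (hdd : ∀ j, d j * d j = 1)
    (hgauge : ∀ j, ε j * d j * d (j + 1) = σ j)
    (z : (Fin n → ℝ) × (Fin n → ℝ)) (u v w x : Fin n → ℝ) :
    pb (fun y => u ⬝ᵥ (Leps ε y *ᵥ v)) (fun y => w ⬝ᵥ (Leps σ y *ᵥ x)) z =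
      ∑ r, ((v r * d r * x r + v (r + 1) * d (r + 1) * x (r + 1)) * wronskian ε z u (d * w) r +
        (u r * d r * w r + u (r + 1) * d (r + 1) * w (r + 1)) * wronskian ε z v (d * x) r) / 2 := by
  simp only [dotProduct_Leps_mulVec]
  rw [pb_laxFun]
  refine Finset.sum_congr rfl fun r _ => ?_
  simpa only [wronskian, Pi.mul_apply] using bracket_site_eq (ε r) (σ r) (d r) (d (r + 1))
    (bfun z r) (u r) (u (r + 1)) (v r) (v (r + 1)) (w r) (w (r + 1)) (x r) (x (r + 1))
    (hdd r) (hdd (r + 1)) (hgauge r)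

end Gauge

theorem stmt15_general (n : ℕ) [NeZero n] (ε σ : Fin n → ℝ)
    (hε : ∀ m, ε m = 1 ∨ ε m = -1) (hσ : ∀ m, σ m = 1 ∨ σ m = -1)
    (hprod : ∏ m : Fin n, ε m * σ m = 1)
    (z : (Fin n → ℝ) × (Fin n → ℝ)) (lam : ℝ) (u v w x : Fin n → ℝ)
    (hu : Leps ε z *ᵥ u = lam • u) (hv : Leps ε z *ᵥ v = lam • v)
    (hw : Leps σ z *ᵥ w = lam • w) (hx : Leps σ z *ᵥ x = lam • x)
    (d : Fin n → ℝ)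
    (hd : ∀ m : Fin n, d m = ∏ k : Fin n, if k.val < m.val then ε k * σ k else 1)
    (S : (Fin n → ℝ) → (Fin n → ℝ) → ℝ)
    (hS : ∀ a c : Fin n → ℝ, S a c = ∑ m : Fin n,
      d m * bfun z m * (ε m * a (m + 1) * c m - σ m * a m * c (m + 1))) :
    pb (fun y => u ⬝ᵥ (Leps ε y *ᵥ v)) (fun y => w ⬝ᵥ (Leps σ y *ᵥ x)) z =
      (1 / n) * ((∑ m : Fin n, v m * d m * x m) * S u w +
        (∑ m : Fin n, u m * d m * w m) * S v x) := by
  have hsucc := prefix_sign_add_one hprod hd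
  have hdd := prefix_sign_mul_self hε hσ hd
  have h₁ := mul_gauge_add_one hε hsucc
  have hDw := Leps_mulVec_mul h₁ (mul_gauge hσ hsucc) hw
  have hDx := Leps_mulVec_mul h₁ (mul_gauge hσ hsucc) hx
  have hS' a c : S a c = ∑ m, wronskian ε z a (d * c) m :=
    (hS a c).trans (sum_gauge_eq_sum_wronskian h₁ z a c)
  have hW := Fin.apply_eq_apply_zero_of_add_one (wronskian_add_one hu hDw)
  have hW' := Fin.apply_eq_apply_zero_of_add_one (wronskian_add_one hv hDx)
  set F : Fin n → ℝ := fun r => v r * d r * x r * wronskian ε z u (d * w) 0 +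
    u r * d r * w r * wronskian ε z v (d * x) 0
  calc _ = ∑ r, (F r + F (r + 1)) / 2 := by
        rw [pb_dotProduct_Leps hdd (mul_gauge_mul_gauge hε hdd hsucc)]
        exact Finset.sum_congr rfl fun r _ => by rw [hW, hW']; ring
    _ = ∑ r, F r := Fin.sum_add_apply_add_one_div_two F
    _ = _ := by
        rw [hS', hS', sum_wronskian hu hDw, sum_wronskian hv hDx]
        simp only [F, Finset.sum_add_distrib, ← Finset.sum_mul]
        field_simp [Nat.cast_ne_zero.mpr (NeZero.ne n)]

/-- the Poisson bracket of spectral components at a common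
eigenvalue when Π ε_m σ_m = +1. -/
theorem stmt15 (n : ℕ) [NeZero n] (hn : 2 ≤ n) (ε σ : Fin n → ℝ)
    (hε : ∀ m, ε m = 1 ∨ ε m = -1) (hσ : ∀ m, σ m = 1 ∨ σ m = -1)
    (hprod : ∏ m : Fin n, ε m * σ m = 1)
    (z : (Fin n → ℝ) × (Fin n → ℝ)) (lam : ℝ) (u v w x : Fin n → ℝ)
    (hu : Leps ε z *ᵥ u = lam • u) (hv : Leps ε z *ᵥ v = lam • v)
    (hw : Leps σ z *ᵥ w = lam • w) (hx : Leps σ z *ᵥ x = lam • x)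
    (d : Fin n → ℝ)
    (hd : ∀ m : Fin n, d m = ∏ k : Fin n, if k.val < m.val then ε k * σ k else 1)
    (S : (Fin n → ℝ) → (Fin n → ℝ) → ℝ)
    (hS : ∀ a c : Fin n → ℝ, S a c = ∑ m : Fin n,
      d m * bfun z m * (ε m * a (m + 1) * c m - σ m * a m * c (m + 1))) :
    pb (fun y => u ⬝ᵥ (Leps ε y *ᵥ v)) (fun y => w ⬝ᵥ (Leps σ y *ᵥ x)) z =
      (1 / n) * ((∑ m : Fin n, v m * d m * x m) * S u w +
        (∑ m : Fin n, u m * d m * w m) * S v x) :=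
  stmt15_general n ε σ hε hσ hprod z lam u v w x hu hv hw hx d hd S hS
end

section
/- Fix a phase-space point z ∈ ℝ^{2n} and a vector c ∈ ℝ^n. If Σ_{j=1}^n c_j L(z)^{j−1} = 0 (the zero n×n matrix), then Σ_{j=1}^n c_j dF_j(z) = 0 as a linear functional on ℝ^{2n}; that is, any polynomial of degree at most n−1 annihilating L(z) gives a linear relation among the differentials of the integrals F_1, …, F_n at z. The same implication holds with L̄ in place of L. -/
open Matrix BigOperators

/-!
The differential of `F_j = (1/j) Tr L^j` is `v ↦ Tr (L^{j-1} dL(v))`, so `∑ c_j dF_j` equals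
`Tr ((∑ c_j L^{j-1}) dL(·))` and vanishes when the polynomial annihilates `L`.

For `L̄`, split `L = J + C` and `L̄ = J - C`, where `C` holds the two corner entries `b_n`.
Then `Tr L^m - Tr L̄^m = Tr ((J + C)^m - (J - C)^m)` sums the closed walks of length `m` on the
`n`-cycle that cross the corner edge an odd number of times. Such a walk winds around the cycle,
so there is none for `m < n`, and for `m = n` there are `2n` of them, each of weight
`∏ b_j = 1`. Hence `F_j` and `(1/j) Tr L̄^j` differ by a constant for `j ≤ n`, and the first
argument applies to `L̄`.
-/

theorem Matrix.exists_ne_zero_of_mul_apply_ne_zero {l m o R : Type*} [Fintype m]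
    [NonUnitalNonAssocSemiring R] {M : Matrix l m R} {N : Matrix m o R} {i : l} {j : o}
    (h : (M * N) i j ≠ 0) : ∃ k, M i k ≠ 0 ∧ N k j ≠ 0 := by
  obtain ⟨k, -, hk⟩ := Finset.exists_ne_zero_of_sum_ne_zero h
  exact ⟨k, left_ne_zero_of_mul hk, right_ne_zero_of_mul hk⟩

theorem Fintype.prod_ite_mul_eq {ι M : Type*} [Fintype ι] [DecidableEq ι] [CommMonoid M]
    (f : ι → M) {P Q : ι → Prop} [DecidablePred P] [DecidablePred Q] (l : ι) (hl : ¬P l)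
    (hQ : ∀ r, Q r ↔ P r ∨ r = l) :
    (∏ r, if P r then f r else 1) * f l = ∏ r, if Q r then f r else 1 := by
  have hsplit : ∀ r, (if Q r then f r else 1) =
      (if P r then f r else 1) * (if r = l then f r else 1) := by
    intro r
    by_cases hr : r = l
    · subst hr; simp [hl, hQ]
    · by_cases hP : P r <;> simp [hP, hr, hQ]
  simp_rw [hsplit, Finset.prod_mul_distrib, Finset.prod_ite_eq', Finset.mem_univ, if_true]

theorem Fintype.prod_ite_mul_eq_prod {ι M : Type*} [Fintype ι] [DecidableEq ι] [CommMonoid M]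
    (f : ι → M) {P : ι → Prop} [DecidablePred P] (l : ι) (hP : ∀ r, ¬P r ↔ r = l) :
    (∏ r, if P r then f r else 1) * f l = ∏ r, f r := by
  simpa using Fintype.prod_ite_mul_eq f (Q := fun _ => True) l ((hP l).2 rfl)
    fun r => by simpa using (em (P r)).imp_right (hP r).1

theorem Fin.add_one_eq_iff_val {n : ℕ} [NeZero n] (i j : Fin n) :
    i + 1 = j ↔ (i : ℕ) + 1 = j ∨ ((i : ℕ) + 1 = n ∧ (j : ℕ) = 0) := by
  obtain ⟨m, rfl⟩ : ∃ m, n = m + 1 := ⟨n - 1, by have := NeZero.pos n; omega⟩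
  rw [Fin.ext_iff, Fin.val_add_one]
  split_ifs with h <;> simp only [Fin.ext_iff, Fin.val_last] at h <;> omega

@[fun_prop]
theorem differentiable_ite_zero {E F : Type*} [NormedAddCommGroup E] [NormedSpace ℝ E]
    [NormedAddCommGroup F] [NormedSpace ℝ F] (c : Prop) [Decidable c] {f : E → F}
    (hf : Differentiable ℝ f) : Differentiable ℝ fun x => if c then f x else 0 := by
  by_cases h : c <;> simp [h, hf]

section TracePow

open scoped Matrix.Norms.Operator

variable {ι E : Type*} [Fintype ι] [DecidableEq ι] [NormedAddCommGroup E] [NormedSpace ℝ E]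
  {G : E → Matrix ι ι ℝ} {z : E}

theorem Matrix.differentiableAt_of_apply (hG : ∀ i j, DifferentiableAt ℝ (fun w => G w i j) z) :
    DifferentiableAt ℝ G z := by
  have hsum : G = fun w => ∑ i, ∑ j, G w i j • Matrix.single i j (1 : ℝ) := by
    ext w : 1
    simpa [Matrix.smul_single] using Matrix.matrix_eq_sum_single (G w)
  rw [hsum]
  fun_prop

theorem fderiv_trace_pow_apply (hG : DifferentiableAt ℝ G z) (m : ℕ) (v : E) :
    fderiv ℝ (fun w => (1 / ((m + 1 : ℕ) : ℝ)) * (G w ^ (m + 1)).trace) z v =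
      (G z ^ m * fderiv ℝ G z v).trace := by
  have h := ((Matrix.traceLinearMap ι ℝ ℝ).toContinuousLinearMap.hasFDerivAt.comp z
    (hG.hasFDerivAt.fun_pow' (m + 1))).const_mul (1 / ((m + 1 : ℕ) : ℝ))
  refine (congrArg (fun L => L v) h.fderiv).trans ?_
  have hterm : ∀ x ∈ Finset.range (m + 1),
      (G z ^ (m - x) * fderiv ℝ G z v * G z ^ x).trace = (G z ^ m * fderiv ℝ G z v).trace := by
    intro x hx
    rw [Matrix.trace_mul_cycle, ← pow_add,
      Nat.add_sub_cancel' (Nat.lt_succ_iff.1 (Finset.mem_range.1 hx))]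
  -- the trace map above carries `Matrix`'s own topology, so `simp` cannot see through it
  change (1 / ((m + 1 : ℕ) : ℝ)) * Matrix.trace
    ((∑ x ∈ Finset.range (m + 1),
      MulOpposite.op (G z ^ x) • G z ^ ((m + 1).pred - x) • fderiv ℝ G z) v) = _
  simp only [FunLike.coe_sum, Finset.sum_apply, FunLike.coe_smul, Pi.smul_apply,
    Matrix.trace_sum, op_smul_eq_mul, smul_eq_mul, Nat.pred_eq_sub_one, Nat.add_sub_cancel]
  rw [Finset.sum_congr rfl hterm, Finset.sum_const, Finset.card_range, nsmul_eq_mul]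
  field_simp

theorem sum_smul_fderiv_trace_pow_eq_zero (hG : ∀ i j, DifferentiableAt ℝ (fun w => G w i j) z)
    {N : ℕ} (c : Fin N → ℝ) (hc : ∑ j, c j • G z ^ (j : ℕ) = 0) :
    ∑ j : Fin N, c j • fderiv ℝ
      (fun w => (1 / (((j : ℕ) + 1 : ℕ) : ℝ)) * (G w ^ ((j : ℕ) + 1)).trace) z = 0 := by
  refine ContinuousLinearMap.ext fun v => ?_
  simp only [FunLike.coe_sum, Finset.sum_apply, FunLike.coe_smul, Pi.smul_apply,
    fderiv_trace_pow_apply (Matrix.differentiableAt_of_apply hG), _root_.zero_apply]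
  calc ∑ j : Fin N, c j • (G z ^ (j : ℕ) * fderiv ℝ G z v).trace
      = ((∑ j, c j • G z ^ (j : ℕ)) * fderiv ℝ G z v).trace := by
        simp only [Matrix.sum_mul, Matrix.trace_sum, Matrix.smul_mul, Matrix.trace_smul]
    _ = 0 := by rw [hc, Matrix.zero_mul, Matrix.trace_zero]

end TracePow

namespace Toda

section Bands

variable {n : ℕ} {R : Type*} [Ring R]

def IsBanded (k : ℕ) (M : Matrix (Fin n) (Fin n) R) : Prop :=
  ∀ i j, M i j ≠ 0 → (i : ℕ) ≤ j + k ∧ (j : ℕ) ≤ i + k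

/-- Entries vanish unless a walk of length `k` on the `n`-cycle joins the two indices through the
corner edge `{n - 1, 0}`. -/
def IsCornerBanded (k : ℕ) (M : Matrix (Fin n) (Fin n) R) : Prop :=
  ∀ i j, M i j ≠ 0 → n + i ≤ j + k ∨ n + j ≤ i + k

variable {a b : ℕ} {M N : Matrix (Fin n) (Fin n) R}

theorem IsBanded.apply_eq_zero (hM : IsBanded a M) {i j : Fin n}
    (h : ¬((i : ℕ) ≤ j + a ∧ (j : ℕ) ≤ i + a)) : M i j = 0 :=
  not_not.1 (mt (hM i j) h)

theorem IsCornerBanded.apply_eq_zero (hM : IsCornerBanded a M) {i j : Fin n}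
    (h : ¬(n + i ≤ j + a ∨ n + j ≤ i + a)) : M i j = 0 :=
  not_not.1 (mt (hM i j) h)

theorem IsCornerBanded.trace_eq_zero (hM : IsCornerBanded a M) (ha : a < n) : M.trace = 0 :=
  Finset.sum_eq_zero fun _ _ => hM.apply_eq_zero (by omega)

theorem isBanded_one : IsBanded 0 (1 : Matrix (Fin n) (Fin n) R) := by
  intro i j h
  obtain rfl : i = j := by by_contra hij; exact h (Matrix.one_apply_ne hij)
  omega

theorem isCornerBanded_zero : IsCornerBanded a (0 : Matrix (Fin n) (Fin n) R) :=
  fun _ _ h => absurd rfl h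

theorem IsBanded.add (hM : IsBanded a M) (hN : IsBanded a N) : IsBanded a (M + N) := by
  intro i j h
  by_cases hMij : M i j = 0
  · exact hN i j (by simpa [hMij] using h)
  · exact hM i j hMij

theorem IsCornerBanded.add (hM : IsCornerBanded a M) (hN : IsCornerBanded a N) :
    IsCornerBanded a (M + N) := by
  intro i j h
  by_cases hMij : M i j = 0
  · exact hN i j (by simpa [hMij] using h)
  · exact hM i j hMij

theorem IsBanded.mul (hM : IsBanded a M) (hN : IsBanded b N) : IsBanded (a + b) (M * N) := by
  intro i j h
  obtain ⟨l, hil, hlj⟩ := Matrix.exists_ne_zero_of_mul_apply_ne_zero h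
  have := hM i l hil; have := hN l j hlj
  omega

theorem IsBanded.mul_isCornerBanded (hM : IsBanded a M) (hN : IsCornerBanded b N) :
    IsCornerBanded (a + b) (M * N) := by
  intro i j h
  obtain ⟨l, hil, hlj⟩ := Matrix.exists_ne_zero_of_mul_apply_ne_zero h
  have := hM i l hil; have := hN l j hlj
  omega

theorem IsCornerBanded.mul_isBanded (hM : IsCornerBanded a M) (hN : IsBanded b N) :
    IsCornerBanded (a + b) (M * N) := by
  intro i j h
  obtain ⟨l, hil, hlj⟩ := Matrix.exists_ne_zero_of_mul_apply_ne_zero h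
  have := hM i l hil; have := hN l j hlj
  omega

/-- If `a + b < n`, the two crossings of the corner go in opposite directions and cancel;
otherwise every pair of indices is within distance `a + b`. -/
theorem IsCornerBanded.mul (hM : IsCornerBanded a M) (hN : IsCornerBanded b N) :
    IsBanded (a + b) (M * N) := by
  intro i j h
  obtain ⟨l, hil, hlj⟩ := Matrix.exists_ne_zero_of_mul_apply_ne_zero h
  have := hM i l hil; have := hN l j hlj
  have := i.isLt; have := j.isLt; have := l.isLt
  omega

end Bands

section EvenOdd

variable {R : Type*} [Ring R] {ι : Type*} [Fintype ι] [DecidableEq ι]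

def powEven (J C : Matrix ι ι R) (k : ℕ) : Matrix ι ι R := (J + C) ^ k + (J - C) ^ k

def powOdd (J C : Matrix ι ι R) (k : ℕ) : Matrix ι ι R := (J + C) ^ k - (J - C) ^ k

variable (J C : Matrix ι ι R) (k : ℕ)

theorem powEven_zero : powEven J C 0 = 1 + 1 := by simp [powEven]

theorem powOdd_zero : powOdd J C 0 = 0 := by simp [powOdd]

theorem powEven_succ : powEven J C (k + 1) = powEven J C k * J + powOdd J C k * C := by
  simp only [powEven, powOdd, pow_succ]
  noncomm_ring

theorem powOdd_succ : powOdd J C (k + 1) = powOdd J C k * J + powEven J C k * C := by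
  simp only [powEven, powOdd, pow_succ]
  noncomm_ring

end EvenOdd

section Transpose

variable {R : Type*} [CommRing R] {ι : Type*} [Fintype ι] [DecidableEq ι] {J C : Matrix ι ι R}

theorem powEven_transpose (hJ : Jᵀ = J) (hC : Cᵀ = C) (k : ℕ) :
    (powEven J C k)ᵀ = powEven J C k := by
  simp only [powEven, Matrix.transpose_add, Matrix.transpose_pow, Matrix.transpose_sub, hJ, hC]

theorem powOdd_transpose (hJ : Jᵀ = J) (hC : Cᵀ = C) (k : ℕ) :
    (powOdd J C k)ᵀ = powOdd J C k := by
  simp only [powOdd, Matrix.transpose_add, Matrix.transpose_pow, Matrix.transpose_sub, hJ, hC]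

end Transpose

theorem isBanded_powEven_and_isCornerBanded_powOdd {n : ℕ} {R : Type*} [Ring R]
    {J C : Matrix (Fin n) (Fin n) R} (hJ : IsBanded 1 J) (hC : IsCornerBanded 1 C) {k : ℕ}
    (hk : k ≤ n) : IsBanded k (powEven J C k) ∧ IsCornerBanded k (powOdd J C k) := by
  induction k with
  | zero =>
    rw [powEven_zero, powOdd_zero]
    exact ⟨isBanded_one.add isBanded_one, isCornerBanded_zero⟩
  | succ k ih =>
    obtain ⟨hE, hO⟩ := ih (by omega)
    rw [powEven_succ, powOdd_succ]
    exact ⟨(hE.mul hJ).add (hO.mul hC), (hO.mul_isBanded hJ).add (hE.mul_isCornerBanded hC)⟩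

section Chain

variable {n : ℕ} {R : Type*} [CommRing R] (p b : Fin n → R)

def chain : Matrix (Fin n) (Fin n) R := Matrix.of fun i j =>
  (if i = j then p i else 0) + (if (i : ℕ) + 1 = j then b i else 0) +
    (if (j : ℕ) + 1 = i then b j else 0)

def corner : Matrix (Fin n) (Fin n) R := Matrix.of fun i j =>
  (if (i : ℕ) + 1 = n ∧ (j : ℕ) = 0 then b i else 0) +
    (if (j : ℕ) + 1 = n ∧ (i : ℕ) = 0 then b j else 0)

theorem isBanded_chain : IsBanded 1 (chain p b) := by
  intro i j h
  simp only [chain, Matrix.of_apply, Fin.ext_iff] at h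
  split_ifs at h <;> first | omega | simp at h

theorem isCornerBanded_corner : IsCornerBanded 1 (corner b) := by
  intro i j h
  simp only [corner, Matrix.of_apply] at h
  split_ifs at h <;> first | omega | simp at h

theorem chain_transpose : (chain p b)ᵀ = chain p b := by
  ext i j
  simp only [chain, Matrix.transpose_apply, Matrix.of_apply, eq_comm (a := j) (b := i)]
  split_ifs <;> subst_vars <;> ring

theorem corner_transpose : (corner b)ᵀ = corner b := by
  ext i j
  simp only [corner, Matrix.transpose_apply, Matrix.of_apply]
  ring

variable (M : Matrix (Fin n) (Fin n) R)

theorem mul_chain_apply (i j : Fin n) :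
    (M * chain p b) i j = M i j * p j
      + (if h : 0 < (j : ℕ) then M i ⟨j - 1, by omega⟩ * b ⟨j - 1, by omega⟩ else 0)
      + (if h : (j : ℕ) + 1 < n then M i ⟨j + 1, h⟩ * b j else 0) := by
  rw [Matrix.mul_apply]
  simp only [chain, Matrix.of_apply, mul_add, Finset.sum_add_distrib, mul_ite, mul_zero,
    Finset.sum_ite_eq', Finset.mem_univ, if_true]
  congr 2
  · split_ifs with hj
    · rw [Fintype.sum_eq_single ⟨j - 1, by omega⟩ fun l hl =>
        if_neg fun h' => hl (Fin.ext (by simp only; omega))]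
      exact if_pos (by simp only; omega)
    · exact Finset.sum_eq_zero fun l _ => if_neg (by omega)
  · split_ifs with hj
    · rw [Fintype.sum_eq_single ⟨j + 1, hj⟩ fun l hl =>
        if_neg fun h' => hl (Fin.ext (by simp only; omega))]
      exact if_pos rfl
    · exact Finset.sum_eq_zero fun l _ => if_neg (by omega)

theorem mul_corner_apply (i j : Fin n) :
    (M * corner b) i j =
      (if h : (j : ℕ) = 0 then M i ⟨n - 1, by omega⟩ * b ⟨n - 1, by omega⟩ else 0)
      + (if h : (j : ℕ) + 1 = n then M i ⟨0, by omega⟩ * b j else 0) := by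
  rw [Matrix.mul_apply]
  simp only [corner, Matrix.of_apply, mul_add, Finset.sum_add_distrib, mul_ite, mul_zero]
  congr 1
  · split_ifs with hj
    · rw [Fintype.sum_eq_single ⟨n - 1, by omega⟩ fun l hl =>
        if_neg fun h' => hl (Fin.ext (by simp only; omega))]
      exact if_pos ⟨by simp only; omega, hj⟩
    · exact Finset.sum_eq_zero fun l _ => if_neg (by omega)
  · split_ifs with hj
    · rw [Fintype.sum_eq_single ⟨0, by omega⟩ fun l hl =>
        if_neg fun h' => hl (Fin.ext (by simp only; omega))]
      exact if_pos ⟨hj, rfl⟩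
    · exact Finset.sum_eq_zero fun l _ => if_neg (by omega)

end Chain

section Walks

variable {n : ℕ} {R : Type*} [CommRing R] (p b : Fin n → R)

local notation "E" => powEven (chain p b) (corner b)
local notation "O" => powOdd (chain p b) (corner b)

theorem isBanded_powEven {k : ℕ} (hk : k ≤ n) : IsBanded k (E k) :=
  (isBanded_powEven_and_isCornerBanded_powOdd (isBanded_chain p b) (isCornerBanded_corner b)
    hk).1

theorem isCornerBanded_powOdd {k : ℕ} (hk : k ≤ n) : IsCornerBanded k (O k) :=
  (isBanded_powEven_and_isCornerBanded_powOdd (isBanded_chain p b) (isCornerBanded_corner b)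
    hk).2

theorem powEven_apply_comm (k : ℕ) (i j : Fin n) : E k i j = E k j i := by
  rw [← Matrix.transpose_apply (E k),
    powEven_transpose (chain_transpose p b) (corner_transpose b)]

theorem powOdd_apply_comm (k : ℕ) (i j : Fin n) : O k i j = O k j i := by
  rw [← Matrix.transpose_apply (O k),
    powOdd_transpose (chain_transpose p b) (corner_transpose b)]

/-- The only even walk of length `k` from `i` to `i + k` is the straight one. -/
theorem powEven_apply_of_val_add_eq {k : ℕ} (hk : k < n) (i : Fin n) {j : Fin n}
    (h : (i : ℕ) + k = j) :
    E k i j = 2 * ∏ r : Fin n, if (i : ℕ) ≤ r ∧ (r : ℕ) < j then b r else 1 := by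
  induction k generalizing j with
  | zero =>
    obtain rfl : i = j := Fin.ext (by omega)
    simp [powEven_zero, Finset.prod_ite_of_false, one_add_one_eq_two]
  | succ k ih =>
    have hE := isBanded_powEven p b (k := k) (by omega)
    have hO := isCornerBanded_powOdd p b (k := k) (by omega)
    have hright : (if h : (j : ℕ) + 1 < n then E k i ⟨j + 1, h⟩ * b j else 0) = 0 :=
      dite_eq_right_iff.2 fun _ => by rw [hE.apply_eq_zero (by simp only; omega), zero_mul]
    have hcorner : (if h : (j : ℕ) + 1 = n then O k i ⟨0, by omega⟩ * b j else 0) = 0 :=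
      dite_eq_right_iff.2 fun _ => by rw [hO.apply_eq_zero (by simp only; omega), zero_mul]
    rw [powEven_succ, Matrix.add_apply, mul_chain_apply, mul_corner_apply, hright, hcorner,
      hE.apply_eq_zero (i := i) (j := j) (by omega), dif_pos (show 0 < (j : ℕ) by omega),
      dif_neg (show ¬(j : ℕ) = 0 by omega), ih (by omega) (by simp only; omega), mul_assoc,
      Fintype.prod_ite_mul_eq (Q := fun r : Fin n => (i : ℕ) ≤ r ∧ (r : ℕ) < j) _ _
        (by simp only; omega) fun r => by simp only [Fin.ext_iff]; omega]
    ring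

/-- The only odd walk of length `k` from `i` to `j = i + n - k` is the straight one through
the corner, visiting `i - 1, …, 0, n - 1, …, j`. -/
theorem powOdd_apply_of_val_add_eq {k : ℕ} (hk : k < n) (i : Fin n) {j : Fin n}
    (h : (j : ℕ) + k = i + n) :
    O k i j = 2 * ∏ r : Fin n, if (r : ℕ) < i ∨ (j : ℕ) ≤ r then b r else 1 := by
  induction k generalizing j with
  | zero => omega
  | succ k ih =>
    have hO := isCornerBanded_powOdd p b (k := k) (by omega)
    have hleft : (if h : 0 < (j : ℕ) then
        O k i ⟨j - 1, by omega⟩ * b ⟨j - 1, by omega⟩ else 0) = 0 :=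
      dite_eq_right_iff.2 fun _ => by rw [hO.apply_eq_zero (by simp only; omega), zero_mul]
    rw [powOdd_succ, Matrix.add_apply, mul_chain_apply, mul_corner_apply, hleft,
      hO.apply_eq_zero (i := i) (j := j) (by omega), dif_neg (show ¬(j : ℕ) = 0 by omega)]
    by_cases hj : (j : ℕ) + 1 < n
    · rw [dif_pos hj, dif_neg (by omega), ih (by omega) (by simp only; omega), mul_assoc,
        Fintype.prod_ite_mul_eq (Q := fun r : Fin n => (r : ℕ) < i ∨ (j : ℕ) ≤ r) _ _
          (by simp only; omega) fun r => by simp only [Fin.ext_iff]; omega]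
      ring
    · rw [dif_neg hj, dif_pos (by omega), powEven_apply_comm,
        powEven_apply_of_val_add_eq p b (by omega) _ (by simp only; omega), mul_assoc,
        Fintype.prod_ite_mul_eq (Q := fun r : Fin n => (r : ℕ) < i ∨ (j : ℕ) ≤ r) _ _
          (by simp only; omega) fun r => by simp only [Fin.ext_iff]; omega]
      ring

/-- The odd closed walks of length `n` at `i` are the two windings around the cycle, which
leave `i` towards `i - 1` and towards `i + 1` respectively. -/
theorem powOdd_apply_self_of_succ_eq {k : ℕ} (hk : k + 1 = n) (i : Fin n) :
    O (k + 1) i i = 4 * ∏ r, b r := by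
  have hO := isCornerBanded_powOdd p b (k := k) (by omega)
  have hleft :
      (if h : 0 < (i : ℕ) then O k i ⟨i - 1, by omega⟩ * b ⟨i - 1, by omega⟩ else 0)
      + (if h : (i : ℕ) = 0 then E k i ⟨n - 1, by omega⟩ * b ⟨n - 1, by omega⟩ else 0)
      = 2 * ∏ r, b r := by
    by_cases hi : 0 < (i : ℕ)
    · rw [dif_pos hi, dif_neg (by omega), add_zero, powOdd_apply_comm,
        powOdd_apply_of_val_add_eq p b (by omega) _ (by simp only; omega), mul_assoc,
        Fintype.prod_ite_mul_eq_prod _ _ fun r => by simp only [Fin.ext_iff]; omega]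
    · rw [dif_neg hi, dif_pos (by omega), zero_add,
        powEven_apply_of_val_add_eq p b (by omega) i (by simp only; omega), mul_assoc,
        Fintype.prod_ite_mul_eq_prod _ _ fun r => by simp only [Fin.ext_iff]; omega]
  have hright : (if h : (i : ℕ) + 1 < n then O k i ⟨i + 1, h⟩ * b i else 0)
      + (if h : (i : ℕ) + 1 = n then E k i ⟨0, by omega⟩ * b i else 0)
      = 2 * ∏ r, b r := by
    by_cases hi : (i : ℕ) + 1 < n
    · rw [dif_pos hi, dif_neg (by omega), add_zero,
        powOdd_apply_of_val_add_eq p b (by omega) i (by simp only; omega), mul_assoc,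
        Fintype.prod_ite_mul_eq_prod _ _ fun r => by simp only [Fin.ext_iff]; omega]
    · rw [dif_neg hi, dif_pos (by omega), zero_add, powEven_apply_comm,
        powEven_apply_of_val_add_eq p b (by omega) _ (by simp only; omega), mul_assoc,
        Fintype.prod_ite_mul_eq_prod _ _ fun r => by simp only [Fin.ext_iff]; omega]
  rw [powOdd_succ, Matrix.add_apply, mul_chain_apply, mul_corner_apply,
    hO.apply_eq_zero (i := i) (j := i) (by omega)]
  linear_combination hleft + hright

theorem trace_powOdd_self [NeZero n] : (O n).trace = 4 * n * ∏ r, b r := by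
  obtain ⟨k, hk⟩ : ∃ k, k + 1 = n := ⟨n - 1, Nat.sub_add_cancel (NeZero.pos n)⟩
  rw [← congrArg (powOdd (chain p b) (corner b)) hk]
  simp only [Matrix.trace, Matrix.diag, powOdd_apply_self_of_succ_eq p b hk, Finset.sum_const,
    Finset.card_univ, Fintype.card_fin, nsmul_eq_mul]
  ring

theorem trace_pow_add_corner_sub_trace_pow_sub_corner [NeZero n] {m : ℕ} (hm : m ≤ n) :
    ((chain p b + corner b) ^ m).trace - ((chain p b - corner b) ^ m).trace =
      if m = n then 4 * n * ∏ r, b r else 0 := by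
  rw [← Matrix.trace_sub]
  change (O m).trace = _
  split_ifs with h
  · subst h
    exact trace_powOdd_self p b
  · exact (isCornerBanded_powOdd p b hm).trace_eq_zero (lt_of_le_of_ne hm h)

end Walks

section Lax

variable {n : ℕ} [NeZero n]

theorem ite_add_one_eq (i j : Fin n) (x : ℝ) :
    (if i + 1 = j then x else 0) =
      (if (i : ℕ) + 1 = j then x else 0) +
        (if (i : ℕ) + 1 = n ∧ (j : ℕ) = 0 then x else 0) := by
  by_cases h₁ : (i : ℕ) + 1 = j
  · rw [if_pos ((Fin.add_one_eq_iff_val i j).2 (.inl h₁)), if_pos h₁, if_neg (by omega),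
      add_zero]
  by_cases h₂ : (i : ℕ) + 1 = n ∧ (j : ℕ) = 0
  · rw [if_pos ((Fin.add_one_eq_iff_val i j).2 (.inr h₂)), if_neg h₁, if_pos h₂, zero_add]
  · rw [if_neg (by rw [Fin.add_one_eq_iff_val]; tauto), if_neg h₁, if_neg h₂, add_zero]

theorem ite_add_one_eq_sgn_mul (i j : Fin n) (x : ℝ) :
    (if i + 1 = j then sgn i * x else 0) =
      (if (i : ℕ) + 1 = j then x else 0) -
        (if (i : ℕ) + 1 = n ∧ (j : ℕ) = 0 then x else 0) := by
  have hsgn : sgn i = if (i : ℕ) + 1 = n then -1 else 1 := by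
    simp only [sgn, Fin.add_one_eq_iff_val, Fin.val_zero, and_true, Nat.add_one_ne_zero,
      false_or]
  by_cases h₁ : (i : ℕ) + 1 = j
  · rw [if_pos ((Fin.add_one_eq_iff_val i j).2 (.inl h₁)), if_pos h₁, if_neg (by omega), hsgn,
      if_neg (by omega), one_mul, sub_zero]
  by_cases h₂ : (i : ℕ) + 1 = n ∧ (j : ℕ) = 0
  · rw [if_pos ((Fin.add_one_eq_iff_val i j).2 (.inr h₂)), if_neg h₁, if_pos h₂, hsgn,
      if_pos h₂.1]
    ring
  · rw [if_neg (by rw [Fin.add_one_eq_iff_val]; tauto), if_neg h₁, if_neg h₂, sub_zero]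

theorem lax_eq_chain_add_corner (z : (Fin n → ℝ) × (Fin n → ℝ)) :
    Lax z = chain z.2 (bfun z) + corner (bfun z) := by
  ext i j
  simp only [Lax, chain, corner, Matrix.add_apply, Matrix.of_apply, ite_add_one_eq]
  ring

theorem laxBar_eq_chain_sub_corner (z : (Fin n → ℝ) × (Fin n → ℝ)) :
    LaxBar z = chain z.2 (bfun z) - corner (bfun z) := by
  ext i j
  simp only [LaxBar, chain, corner, Matrix.sub_apply, Matrix.of_apply, ite_add_one_eq_sgn_mul]
  ring

theorem prod_bfun (z : (Fin n → ℝ) × (Fin n → ℝ)) : ∏ r, bfun z r = 1 := by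
  simp only [bfun, ← Real.exp_sum, ← Finset.sum_div, Finset.sum_sub_distrib]
  have hshift : ∑ r, z.1 (r + 1) = ∑ r, z.1 r := Equiv.sum_comp (Equiv.addRight 1) z.1
  rw [hshift, sub_self, zero_div, Real.exp_zero]

theorem trace_lax_pow (z : (Fin n → ℝ) × (Fin n → ℝ)) {m : ℕ} (hm : m ≤ n) :
    (Lax z ^ m).trace = (LaxBar z ^ m).trace + if m = n then (4 * n : ℝ) else 0 := by
  rw [lax_eq_chain_add_corner, laxBar_eq_chain_sub_corner, ← sub_eq_iff_eq_add',
    trace_pow_add_corner_sub_trace_pow_sub_corner _ _ hm, prod_bfun, mul_one]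

theorem differentiable_bfun (r : Fin n) : Differentiable ℝ fun z => bfun z r := by
  unfold bfun
  fun_prop

theorem differentiable_lax_apply (i j : Fin n) : Differentiable ℝ fun z => Lax z i j := by
  have := differentiable_bfun (n := n)
  unfold Lax
  fun_prop

theorem differentiable_laxBar_apply (i j : Fin n) : Differentiable ℝ fun z => LaxBar z i j := by
  have := differentiable_bfun (n := n)
  unfold LaxBar
  fun_prop

end Lax

end Toda

theorem stmt18_general (n : ℕ) [NeZero n] (z : (Fin n → ℝ) × (Fin n → ℝ))
    (c : Fin n → ℝ) :
    ((∑ j : Fin n, c j • Lax z ^ (j.val) = 0) →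
      ∑ j : Fin n, c j • fderiv ℝ (F (j.val + 1)) z = 0) ∧
    ((∑ j : Fin n, c j • LaxBar z ^ (j.val) = 0) →
      ∑ j : Fin n, c j • fderiv ℝ (F (j.val + 1)) z = 0) := by
  refine ⟨sum_smul_fderiv_trace_pow_eq_zero
    (fun i j => (Toda.differentiable_lax_apply i j).differentiableAt) c, fun hc => ?_⟩
  have hF : ∀ j : Fin n, F (j.val + 1) = fun w =>
      (1 / ((j.val + 1 : ℕ) : ℝ)) * (LaxBar w ^ (j.val + 1)).trace +
        (1 / ((j.val + 1 : ℕ) : ℝ)) * (if j.val + 1 = n then (4 * n : ℝ) else 0) :=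
    fun j => funext fun w => by unfold F; rw [Toda.trace_lax_pow w j.isLt, mul_add]
  simp only [hF, fderiv_add_const]
  exact sum_smul_fderiv_trace_pow_eq_zero
    (fun i j => (Toda.differentiable_laxBar_apply i j).differentiableAt) c hc

/-- a polynomial of degree ≤ n−1 annihilating L(z) (or L̄(z))
gives a linear relation among the differentials dF_j(z). -/
theorem stmt18 (n : ℕ) [NeZero n] (hn : 2 ≤ n) (z : (Fin n → ℝ) × (Fin n → ℝ))
    (c : Fin n → ℝ) :
    ((∑ j : Fin n, c j • Lax z ^ (j.val) = 0) →
      ∑ j : Fin n, c j • fderiv ℝ (F (j.val + 1)) z = 0) ∧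
    ((∑ j : Fin n, c j • LaxBar z ^ (j.val) = 0) →
      ∑ j : Fin n, c j • fderiv ℝ (F (j.val + 1)) z = 0) :=
  stmt18_general n z c
end
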